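/- Directed single linkage is scale invariant: let ψ : [0,∞) → [0,∞) be a non-decreasing function with ψ(a) = 0 iff a = 0. For any finite network (X, A_X), the directed minimum chain cost of (X, ψ ∘ A_X) equals ψ composed with the directed minimum chain cost of (X, A_X): ũ*_{ψ(A_X)}(x,x') = ψ(ũ*_{A_X}(x,x')) for all x, x' ∈ X. -/

import Mathlib

/-!
Composing with `ψ` commutes with taking the cost of a single chain, because a function that is
monotone on `[0, ∞)` commutes with `max` there and `ψ 0 = 0` handles trivial chains. So the chain
costs of the rescaled network are the images under `ψ` of the original ones. On a finite network
these form a finite set, whose infimum is a minimum, and a monotone map sends a minimum to the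
minimum of the image; no continuity of `ψ` is needed.
-/

/-- The cost of a chain: maximum dissimilarity over consecutive links. -/
def chainCost {X : Type*} (A : X → X → ℝ) : List X → ℝ
  | [] => 0
  | [_] => 0
  | a :: b :: rest => max (A a b) (chainCost A (b :: rest))

/-- The directed minimum chain cost `ũ*` of a network `(X, A)`: the minimum,
over all chains from `x` to `x'`, of the maximum link dissimilarity. -/
noncomputable def dmcc {X : Type*} (A : X → X → ℝ) (x x' : X) : ℝ :=
  sInf {r | ∃ c : List X, c.head? = some x ∧ c.getLast? = some x' ∧ chainCost A c = r}

theorem Set.Finite.map_sInf_of_monotoneOn {α β : Type*} [ConditionallyCompleteLinearOrder α]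
    [ConditionallyCompleteLattice β] {f : α → β} {s : Set α} (hf : MonotoneOn f s)
    (hne : s.Nonempty) (hfin : s.Finite) : f (sInf s) = sInf (f '' s) :=
  (hf.map_isLeast ⟨hne.csInf_mem hfin, fun _ ha => csInf_le hfin.bddBelow ha⟩).csInf_eq.symm

section ChainCost

variable {X : Type*} (A : X → X → ℝ)

def chainCostSet (x x' : X) : Set ℝ :=
  {r | ∃ c : List X, c.head? = some x ∧ c.getLast? = some x' ∧ chainCost A c = r}

theorem dmcc_eq_sInf_chainCostSet (x x' : X) : dmcc A x x' = sInf (chainCostSet A x x') :=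
  rfl

variable {A}

theorem chainCost_nonneg (hA : ∀ x x', 0 ≤ A x x') : ∀ c : List X, 0 ≤ chainCost A c
  | [] => le_rfl
  | [_] => le_rfl
  | a :: _ :: _ => le_max_of_le_left (hA a _)

theorem chainCost_mem_insert_range :
    ∀ c : List X, chainCost A c ∈ insert 0 (Set.range (Function.uncurry A))
  | [] => Set.mem_insert _ _
  | [_] => Set.mem_insert _ _
  | a :: b :: rest => by
      rcases max_choice (A a b) (chainCost A (b :: rest)) with h | h
      · rw [chainCost, h]
        exact Set.mem_insert_of_mem _ ⟨(a, b), rfl⟩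
      · rw [chainCost, h]
        exact chainCost_mem_insert_range (b :: rest)

theorem chainCost_comp (hA : ∀ x x', 0 ≤ A x x') {ψ : ℝ → ℝ} (hψ : MonotoneOn ψ (Set.Ici 0))
    (hψ0 : ψ 0 = 0) : ∀ c : List X, chainCost (fun y y' => ψ (A y y')) c = ψ (chainCost A c)
  | [] => hψ0.symm
  | [_] => hψ0.symm
  | a :: b :: rest => by
      rw [chainCost, chainCost, chainCost_comp hA hψ hψ0 (b :: rest),
        hψ.map_max (hA a b) (chainCost_nonneg hA (b :: rest))]

theorem chainCostSet_nonempty (x x' : X) : (chainCostSet A x x').Nonempty :=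
  ⟨_, [x, x'], rfl, rfl, rfl⟩

theorem chainCostSet_finite [Finite X] (x x' : X) : (chainCostSet A x x').Finite := by
  refine ((Set.finite_range (Function.uncurry A)).insert 0).subset ?_
  rintro _ ⟨c, -, -, rfl⟩
  exact chainCost_mem_insert_range c

theorem chainCostSet_subset_Ici (hA : ∀ x x', 0 ≤ A x x') (x x' : X) :
    chainCostSet A x x' ⊆ Set.Ici 0 := by
  rintro _ ⟨c, -, -, rfl⟩
  exact chainCost_nonneg hA c

theorem chainCostSet_comp (hA : ∀ x x', 0 ≤ A x x') {ψ : ℝ → ℝ} (hψ : MonotoneOn ψ (Set.Ici 0))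
    (hψ0 : ψ 0 = 0) (x x' : X) :
    chainCostSet (fun y y' => ψ (A y y')) x x' = ψ '' chainCostSet A x x' := by
  ext r
  constructor
  · rintro ⟨c, hx, hx', rfl⟩
    exact ⟨chainCost A c, ⟨c, hx, hx', rfl⟩, (chainCost_comp hA hψ hψ0 c).symm⟩
  · rintro ⟨_, ⟨c, hx, hx', rfl⟩, rfl⟩
    exact ⟨c, hx, hx', chainCost_comp hA hψ hψ0 c⟩

end ChainCost

theorem dsl_scale_invariant_general {X : Type*} [Fintype X]
    (A : X → X → ℝ)
    (hnonneg : ∀ x x', 0 ≤ A x x')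
    (ψ : ℝ → ℝ)
    (hψmono : ∀ a b, 0 ≤ a → a ≤ b → ψ a ≤ ψ b)
    (hψzero : ∀ a, 0 ≤ a → (ψ a = 0 ↔ a = 0)) :
    ∀ x x' : X, dmcc (fun y y' => ψ (A y y')) x x' = ψ (dmcc A x x') := by
  intro x x'
  have hψ : MonotoneOn ψ (Set.Ici 0) := fun a ha b _ hab => hψmono a b ha hab
  have hψ0 : ψ 0 = 0 := (hψzero 0 le_rfl).mpr rfl
  rw [dmcc_eq_sInf_chainCostSet, dmcc_eq_sInf_chainCostSet, chainCostSet_comp hnonneg hψ hψ0,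
    (chainCostSet_finite x x').map_sInf_of_monotoneOn
      (hψ.mono (chainCostSet_subset_Ici hnonneg x x')) (chainCostSet_nonempty x x')]

/-- Directed single linkage is invariant under changes of scale:
for a non-decreasing `ψ : [0,∞) → [0,∞)` with `ψ a = 0` iff `a = 0`, the
directed minimum chain cost of the rescaled network is the rescaled directed
minimum chain cost. -/
theorem dsl_scale_invariant {X : Type*} [Fintype X]
    (A : X → X → ℝ)
    (hnonneg : ∀ x x', 0 ≤ A x x')
    (hid : ∀ x x', A x x' = 0 ↔ x = x')
    (ψ : ℝ → ℝ)
    (hψnonneg : ∀ a, 0 ≤ a → 0 ≤ ψ a)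
    (hψmono : ∀ a b, 0 ≤ a → a ≤ b → ψ a ≤ ψ b)
    (hψzero : ∀ a, 0 ≤ a → (ψ a = 0 ↔ a = 0)) :
    ∀ x x' : X, dmcc (fun y y' => ψ (A y y')) x x' = ψ (dmcc A x x') :=
  dsl_scale_invariant_general A hnonneg ψ hψmono hψzero
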